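/- Let φ : ℝ² → ℝ be twice differentiable with Hessian D²φ Lipschitz continuous with constant M. Define K(z) = z^⊥/(2π|z|²) for z ≠ 0, where z^⊥ = (z₂, −z₁), and H_φ(x,y) = (1/2) K(x−y)·(∇φ(x) − ∇φ(y)) for x ≠ y. Then for all x ≠ y, | H_φ(x,y) − (1/(4π)) ⟨ D²φ(x) ((x−y)/|x−y|), (x−y)^⊥/|x−y| ⟩ | ≤ (M/(8π)) |x−y|; in particular the remainder R_φ(x,y) = H_φ(x,y) − (1/(4π))⟨D²φ(x)(x−y)/|x−y|, (x−y)^⊥/|x−y|⟩ satisfies |R_φ(x,y)| ≤ C|x−y| with C = M/(8π). -/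

import Mathlib

open Real RealInnerProductSpace

/-- Rotation of `z = (z₁, z₂) ∈ ℝ²` by a right angle: `z^⊥ = (z₂, -z₁)`. -/
noncomputable def perp (z : EuclideanSpace ℝ (Fin 2)) : EuclideanSpace ℝ (Fin 2) :=
  (WithLp.equiv 2 (Fin 2 → ℝ)).symm ![z 1, -z 0]

/-- The whole-plane Biot–Savart kernel `K(z) = z^⊥ / (2π |z|²)` (for `z ≠ 0`). -/
noncomputable def biotSavartK (z : EuclideanSpace ℝ (Fin 2)) : EuclideanSpace ℝ (Fin 2) :=
  (2 * π * ‖z‖ ^ 2)⁻¹ • perp z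

lemma taylor_bound {E F : Type*} [NormedAddCommGroup E] [NormedSpace ℝ E]
    [NormedAddCommGroup F] [NormedSpace ℝ F] [CompleteSpace F]
    (f : E → F) (hf : Differentiable ℝ f) (M : ℝ)
    (hLip : ∀ a b, ‖fderiv ℝ f a - fderiv ℝ f b‖ ≤ M * ‖a - b‖) (a b : E) :
    ‖f b - f a - fderiv ℝ f a (b - a)‖ ≤ M / 2 * ‖b - a‖ ^ 2 := by
  rcases eq_or_ne b a with rfl | hab
  · simp
  have hM : 0 ≤ M := by
    have := hLip a b
    have h0 : (0:ℝ) ≤ M * ‖a - b‖ := le_trans (norm_nonneg _) this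
    have : 0 < ‖a - b‖ := by
      rw [norm_pos_iff, sub_ne_zero]; exact fun h => hab h.symm
    nlinarith
  set A : E → (E →L[ℝ] F) := fderiv ℝ f with hA
  have hAcont : Continuous A := by
    refine Metric.continuous_iff.2 fun u ε hε => ?_
    rcases eq_or_lt_of_le hM with hM0 | hM0
    · exact ⟨1, one_pos, fun v _ => by
        have := hLip v u
        rw [dist_eq_norm]
        calc ‖A v - A u‖ ≤ M * ‖v - u‖ := this
        _ ≤ 0 := by rw [← hM0]; simp
        _ < ε := hε⟩
    · refine ⟨ε / M, by positivity, fun v hv => ?_⟩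
      rw [dist_eq_norm]
      calc ‖A v - A u‖ ≤ M * ‖v - u‖ := hLip v u
      _ < M * (ε / M) := by
          apply mul_lt_mul_of_pos_left _ hM0
          rwa [← dist_eq_norm]
      _ = ε := by field_simp
  set p : ℝ → E := fun t => a + t • (b - a) with hp
  set g : ℝ → F := fun t => f (p t) - t • (A a (b - a)) with hg
  have hd : ∀ t : ℝ, HasDerivAt g (A (p t) (b - a) - A a (b - a)) t := by
    intro t
    have hp' : HasDerivAt p (b - a) t := by
      simpa [hp] using ((hasDerivAt_id t).smul_const (b - a)).const_add a
    have h1 : HasDerivAt (fun t => f (p t)) (A (p t) (b - a)) t :=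
      (hf (p t)).hasFDerivAt.comp_hasDerivAt t hp'
    have h2 := h1.sub ((hasDerivAt_id t).smul_const (A a (b - a)))
    simp only [id, one_smul] at h2
    exact h2
  have hdc : Continuous fun t => A (p t) (b - a) - A a (b - a) := by
    have : Continuous fun t => A (p t) := hAcont.comp (by fun_prop)
    exact ((ContinuousLinearMap.apply ℝ F (b - a)).continuous.comp this).sub continuous_const
  have hint : (∫ t in (0:ℝ)..1, (A (p t) (b - a) - A a (b - a))) = g 1 - g 0 :=
    intervalIntegral.integral_eq_sub_of_hasDerivAt (fun t _ => hd t)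
      (hdc.intervalIntegrable 0 1)
  have hval : g 1 - g 0 = f b - f a - A a (b - a) := by
    simp [hg, hp, map_sub]
    abel
  rw [← hval, ← hint]
  have hbd : ∀ t ∈ Set.Icc (0:ℝ) 1, ‖A (p t) (b - a) - A a (b - a)‖ ≤ M * ‖b - a‖^2 * t := by
    intro t ht
    have : ‖A (p t) (b - a) - A a (b - a)‖ ≤ ‖A (p t) - A a‖ * ‖b - a‖ := by
      rw [← ContinuousLinearMap.sub_apply]
      exact (A (p t) - A a).le_opNorm _
    calc ‖A (p t) (b - a) - A a (b - a)‖ ≤ ‖A (p t) - A a‖ * ‖b - a‖ := this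
      _ ≤ (M * ‖p t - a‖) * ‖b - a‖ := by
          apply mul_le_mul_of_nonneg_right (hLip _ _) (norm_nonneg _)
      _ = M * ‖b - a‖^2 * t := by
          simp [hp, norm_smul, abs_of_nonneg ht.1]; ring
  calc ‖∫ t in (0:ℝ)..1, (A (p t) (b - a) - A a (b - a))‖
      ≤ ∫ t in (0:ℝ)..1, ‖A (p t) (b - a) - A a (b - a)‖ :=
        intervalIntegral.norm_integral_le_integral_norm zero_le_one
    _ ≤ ∫ t in (0:ℝ)..1, M * ‖b - a‖^2 * t := by
        apply intervalIntegral.integral_mono_on zero_le_one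
          (hdc.norm.intervalIntegrable 0 1)
          ((continuous_const.mul continuous_id).intervalIntegrable 0 1) hbd
    _ = M / 2 * ‖b - a‖^2 := by
        rw [intervalIntegral.integral_const_mul, integral_id]; ring

lemma norm_perp (z : EuclideanSpace ℝ (Fin 2)) : ‖perp z‖ = ‖z‖ := by
  rw [perp, EuclideanSpace.norm_eq, EuclideanSpace.norm_eq]
  congr 1
  simp [Fin.sum_univ_two, WithLp.equiv_symm_apply]
  ring

/-- If `φ : ℝ² → ℝ` is twice differentiable with Hessian `D²φ = D(∇φ)` Lipschitz with
constant `M`, then for `x ≠ y` the symmetrized kernel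
`H_φ(x,y) = (1/2) K(x-y)·(∇φ(x) - ∇φ(y))` satisfies
`|H_φ(x,y) - (1/(4π)) ⟨D²φ(x) (x-y)/|x-y|, (x-y)^⊥/|x-y|⟩| ≤ (M/(8π)) |x-y|`. -/
theorem stmt_6 (φ : EuclideanSpace ℝ (Fin 2) → ℝ) (M : ℝ)
    (hφ : Differentiable ℝ φ) (hφ' : Differentiable ℝ (gradient φ))
    (hLip : ∀ x y, ‖fderiv ℝ (gradient φ) x - fderiv ℝ (gradient φ) y‖ ≤ M * ‖x - y‖)
    (x y : EuclideanSpace ℝ (Fin 2)) (hxy : x ≠ y) :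
    |(1 / 2) * ⟪biotSavartK (x - y), gradient φ x - gradient φ y⟫ -
        (1 / (4 * π)) *
          ⟪fderiv ℝ (gradient φ) x (‖x - y‖⁻¹ • (x - y)), ‖x - y‖⁻¹ • perp (x - y)⟫| ≤
      (M / (8 * π)) * ‖x - y‖ := by
  set f := gradient φ with hf
  set A := fderiv ℝ f x with hA
  set z := x - y with hz
  have hz0 : z ≠ 0 := sub_ne_zero.2 hxy
  have hzn : (0:ℝ) < ‖z‖ := norm_pos_iff.2 hz0
  have hπ : (0:ℝ) < π := Real.pi_pos
  have hT : ‖(f x - f y) - A z‖ ≤ M / 2 * ‖z‖ ^ 2 := by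
    have h := taylor_bound f hφ' M hLip x y
    have h1 : A (y - x) = -A z := by
      rw [show y - x = -z by rw [hz]; abel, map_neg]
    rw [← hA, h1] at h
    have h2 : f y - f x - -A z = -((f x - f y) - A z) := by abel
    rw [h2, norm_neg, norm_sub_rev y x, ← hz] at h
    exact h
  have k1 : ∀ I : ℝ, (1 / 2) * ((2 * π * ‖z‖ ^ 2)⁻¹ * I) = (4 * π * ‖z‖ ^ 2)⁻¹ * I := by
    intro I
    rw [← mul_assoc]
    congr 1
    rw [div_mul_eq_mul_div, one_mul, eq_comm, inv_eq_iff_eq_inv, eq_comm, inv_div]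
    field_simp
    ring
  have k2 : ∀ I : ℝ, (1 / (4 * π)) * (‖z‖⁻¹ * (‖z‖⁻¹ * I)) = (4 * π * ‖z‖ ^ 2)⁻¹ * I := by
    intro I
    rw [show (1 / (4 * π)) * (‖z‖⁻¹ * (‖z‖⁻¹ * I)) = ((1 / (4 * π)) * ‖z‖⁻¹ * ‖z‖⁻¹) * I by ring]
    congr 1
    field_simp
  have e1 : (1 / 2) * ⟪biotSavartK z, f x - f y⟫ =
      (4 * π * ‖z‖ ^ 2)⁻¹ * ⟪perp z, f x - f y⟫ := by
    rw [biotSavartK, real_inner_smul_left, k1]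
  have e2 : (1 / (4 * π)) * ⟪A (‖z‖⁻¹ • z), ‖z‖⁻¹ • perp z⟫ =
      (4 * π * ‖z‖ ^ 2)⁻¹ * ⟪perp z, A z⟫ := by
    rw [map_smul, real_inner_smul_left, real_inner_smul_right, real_inner_comm, k2]
  rw [e1, e2, ← mul_sub, ← inner_sub_right]
  rw [abs_mul]
  have hc : |(4 * π * ‖z‖ ^ 2)⁻¹| = (4 * π * ‖z‖ ^ 2)⁻¹ := by
    rw [abs_of_nonneg]; positivity
  rw [hc]
  calc (4 * π * ‖z‖ ^ 2)⁻¹ * |⟪perp z, (f x - f y) - A z⟫|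
      ≤ (4 * π * ‖z‖ ^ 2)⁻¹ * (‖perp z‖ * ‖(f x - f y) - A z‖) := by
        apply mul_le_mul_of_nonneg_left (abs_real_inner_le_norm _ _) (by positivity)
    _ ≤ (4 * π * ‖z‖ ^ 2)⁻¹ * (‖z‖ * (M / 2 * ‖z‖ ^ 2)) := by
        apply mul_le_mul_of_nonneg_left _ (by positivity)
        rw [norm_perp]
        exact mul_le_mul_of_nonneg_left hT (le_of_lt hzn)
    _ = (M / (8 * π)) * ‖z‖ := by field_simp; ring
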